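/- (Lebesgue-type differentiation theorem for fiber integrals.) Let f ∈ L¹(ℂⁿ) with ℂⁿ = ℂ^{n-k} × ℂᵏ, 1 ≤ k ≤ n. Then for almost every z'' ∈ ℂᵏ: the function w' ↦ f(w',z'') is integrable on ℂ^{n-k}, and lim_{ε→0} (1/λ_k(B(z'',ε))) ∫_{B(z'',ε)} ∫_{ℂ^{n-k}} |f(w',w'') − f(w',z'')| dλ_{n-k}(w') dλ_k(w'') = 0. -/

import Mathlib

/-!
Approximate `f` in `L¹` by continuous compactly supported functions `φₙ` and let
`hₙ(y) = ∫ ‖f(x, y) - φₙ(x, y)‖ dx`. The fibre distance `∫ ‖f(x, y) - f(x, z)‖ dx` is at most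
`hₙ(y) + ∫ ‖φₙ(x, y) - φₙ(x, z)‖ dx + hₙ(z)`. Averaged over small balls around `z`, the first term
tends to `hₙ(z)` for almost every `z` by the Lebesgue differentiation theorem applied to `hₙ`, and
the second tends to `0` by continuity of `φₙ`; so the limit superior is at most `2 hₙ(z)`. Finally
`infₙ hₙ = 0` almost everywhere, since `∫ infₙ hₙ ≤ ‖f - φₙ‖₁ → 0`. For Haar measure, open and
closed balls differ by a null sphere.
-/

open MeasureTheory Metric ENNReal Filter Topology

theorem ENNReal.tendsto_nhds_zero_of_forall_le {ι α : Type*} {l : Filter α} {F : α → ℝ≥0∞}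
    {B : ι → α → ℝ≥0∞} {b : ι → ℝ≥0∞} (hB : ∀ i, Tendsto (B i) l (𝓝 (b i)))
    (hFB : ∀ i, F ≤ B i) (hb : ⨅ i, b i = 0) : Tendsto F l (𝓝 0) := by
  refine ENNReal.tendsto_nhds_zero.2 fun η hη => ?_
  obtain ⟨i, hi⟩ := iInf_lt_iff.1 (hb.trans_lt hη)
  filter_upwards [(hB i).eventually_lt_const hi] with x hx
  exact (hFB i x).trans hx.le

namespace MeasureTheory

section Average

variable {α : Type*} [MeasurableSpace α] {μ : Measure α}

theorem laverage_add_left' {f g : α → ℝ≥0∞} (hf : AEMeasurable f μ) :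
    ⨍⁻ x, f x + g x ∂μ = ⨍⁻ x, f x ∂μ + ⨍⁻ x, g x ∂μ :=
  lintegral_add_left' (hf.smul_measure _) _

theorem laverage_add_const_le (f : α → ℝ≥0∞) (c : ℝ≥0∞) :
    ⨍⁻ x, f x + c ∂μ ≤ ⨍⁻ x, f x ∂μ + c := calc
  _ = ⨍⁻ x, f x ∂μ + ⨍⁻ _x, c ∂μ := lintegral_add_right _ measurable_const
  _ ≤ _ := by
    gcongr
    exact (laverage_le_essSup _).trans (essSup_le_of_ae_le c (ae_of_all _ fun _ => le_rfl))

theorem ae_iInf_eq_zero_of_iInf_lintegral_eq_zero {ι : Type*} [Countable ι]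
    {h : ι → α → ℝ≥0∞} (hh : ∀ i, AEMeasurable (h i) μ) (h0 : ⨅ i, ∫⁻ a, h i a ∂μ = 0) :
    ∀ᵐ a ∂μ, ⨅ i, h i a = 0 := by
  have : ∫⁻ a, ⨅ i, h i a ∂μ = 0 :=
    le_antisymm (h0 ▸ le_iInf fun i => lintegral_mono fun a => iInf_le _ i) bot_le
  exact (lintegral_eq_zero_iff' (AEMeasurable.iInf hh)).1 this

end Average

theorem Integrable.exists_seq_continuous_hasCompactSupport {α E : Type*}
    [TopologicalSpace α] [NormalSpace α] [R1Space α] [WeaklyLocallyCompactSpace α]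
    [MeasurableSpace α] [BorelSpace α]
    {μ : Measure α} [μ.Regular] [NormedAddCommGroup E] [NormedSpace ℝ E] {f : α → E}
    (hf : Integrable f μ) :
    ∃ φ : ℕ → α → E, (∀ n, Continuous (φ n) ∧ HasCompactSupport (φ n) ∧ Integrable (φ n) μ) ∧
      ⨅ n, ∫⁻ x, ‖f x - φ n x‖ₑ ∂μ = 0 := by
  choose φ hφs hφf hφc hφi using fun n : ℕ =>
    hf.exists_hasCompactSupport_lintegral_sub_le (ENNReal.inv_ne_zero.2 (natCast_ne_top n))
  refine ⟨φ, fun n => ⟨hφc n, hφs n, hφi n⟩, iInf_eq_bot.2 fun η hη => ?_⟩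
  obtain ⟨n, hn⟩ := exists_inv_nat_lt hη.ne'
  exact ⟨n, (hφf n).trans_lt hn⟩

theorem Measure.addHaar_ball_ae_eq_closedBall {E : Type*} [NormedAddCommGroup E]
    [NormedSpace ℝ E] [MeasurableSpace E] [BorelSpace E] [FiniteDimensional ℝ E] (μ : Measure E)
    [μ.IsAddHaarMeasure] (x : E) {r : ℝ} (hr : r ≠ 0) : ball x r =ᵐ[μ] closedBall x r := by
  refine ae_eq_set.2 ⟨by simp [Set.sdiff_eq_empty.2 ball_subset_closedBall], ?_⟩
  rw [closedBall_sdiff_ball]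
  exact Measure.addHaar_sphere_of_ne_zero μ x hr

end MeasureTheory

section Balls

variable {Y : Type*} [PseudoMetricSpace Y] [MeasurableSpace Y] (μ : Measure Y)

theorem tendsto_setLAverage_closedBall_of_tendsto_zero [OpensMeasurableSpace Y] {g : Y → ℝ≥0∞}
    {z : Y} (hg : Tendsto g (𝓝 z) (𝓝 0)) :
    Tendsto (fun ε => ⨍⁻ y in closedBall z ε, g y ∂μ) (𝓝[>] 0) (𝓝 0) := by
  refine ENNReal.tendsto_nhds_zero.2 fun η hη => ?_
  obtain ⟨δ, hδ, hgδ⟩ := eventually_nhds_iff_ball.1 (ENNReal.tendsto_nhds_zero.1 hg η hη)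
  filter_upwards [Ioo_mem_nhdsGT hδ] with ε hε
  refine (laverage_le_essSup _).trans (essSup_le_of_ae_le _ ?_)
  exact (ae_restrict_iff' measurableSet_closedBall).2
    (ae_of_all _ fun y hy => hgδ y (closedBall_subset_ball hε.2 hy))

theorem IsUnifLocDoublingMeasure.ae_tendsto_setLAverage_closedBall [IsUnifLocDoublingMeasure μ]
    [SecondCountableTopology Y] [BorelSpace Y] [IsLocallyFiniteMeasure μ] {g : Y → ℝ≥0∞}
    (hg : AEMeasurable g μ) (hint : ∫⁻ y, g y ∂μ ≠ ∞) :
    ∀ᵐ z ∂μ, Tendsto (fun ε => ⨍⁻ y in closedBall z ε, g y ∂μ) (𝓝[>] 0) (𝓝 (g z)) := by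
  filter_upwards [(vitaliFamily μ 1).ae_tendsto_lintegral_div hg hint] with z hz
  simp_rw [setLAverage_eq]
  refine hz.comp (tendsto_closedBall_filterAt μ (fun _ : ℝ => z) id tendsto_id ?_)
  filter_upwards [self_mem_nhdsWithin] with ε hε
  simpa using le_of_lt hε

end Balls

section Fiber

variable {X Y E : Type*} [TopologicalSpace X] [MeasurableSpace X] [OpensMeasurableSpace X]
  [NormedAddCommGroup E] {ν : Measure X}

theorem Continuous.tendsto_lintegral_enorm_sub_of_hasCompactSupport [TopologicalSpace Y]
    [FirstCountableTopology Y] [IsFiniteMeasureOnCompacts ν] {φ : X × Y → E} (hφ : Continuous φ)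
    (hφs : HasCompactSupport φ) (z : Y) :
    Tendsto (fun y => ∫⁻ x, ‖φ (x, y) - φ (x, z)‖ₑ ∂ν) (𝓝 z) (𝓝 0) := by
  obtain ⟨C, hC⟩ := hφ.bounded_above_of_compact_support hφs
  set K := Prod.fst '' tsupport φ
  have hK : IsCompact K := hφs.image continuous_fst
  have hφK : ∀ x ∉ K, ∀ y, φ (x, y) = 0 := fun x hx y =>
    image_eq_zero_of_notMem_tsupport fun h => hx ⟨_, h, rfl⟩
  have hbound : ∀ y x,
      ‖φ (x, y) - φ (x, z)‖ₑ ≤ K.indicator (fun _ => 2 * ENNReal.ofReal C) x := by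
    intro y x
    by_cases hx : x ∈ K
    · have hφC : ∀ p, ‖φ p‖ₑ ≤ ENNReal.ofReal C := fun p => by
        rw [← ofReal_norm]; exact ofReal_le_ofReal (hC p)
      rw [Set.indicator_of_mem hx, two_mul]
      exact enorm_sub_le.trans (add_le_add (hφC _) (hφC _))
    · simp [hφK x hx]
  have hfin : ∫⁻ x, K.indicator (fun _ => 2 * ENNReal.ofReal C) x ∂ν ≠ ∞ :=
    ((lintegral_indicator_const_le _ _).trans_lt
      (mul_lt_top (mul_lt_top (by simp) ofReal_lt_top) hK.measure_lt_top)).ne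
  have hlim : ∀ x, Tendsto (fun y => ‖φ (x, y) - φ (x, z)‖ₑ) (𝓝 z) (𝓝 0) := fun x => by
    simpa using ((hφ.comp (Continuous.prodMk_right x)).sub
      (continuous_const (y := φ (x, z)))).enorm.tendsto z
  simpa using tendsto_lintegral_filter_of_dominated_convergence' _
    (Eventually.of_forall fun y => (by fun_prop : Continuous _).measurable.aemeasurable)
    (Eventually.of_forall fun y => ae_of_all _ (hbound y)) hfin (ae_of_all _ hlim)

theorem MeasureTheory.setLAverage_lintegral_enorm_sub_le_add [MeasurableSpace Y]
    [SecondCountableTopologyEither X E] [TopologicalSpace Y] [SFinite ν] {μ : Measure Y}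
    [SFinite μ]
    (s : Set Y) {f φ : X × Y → E} {z : Y} (hφ : Continuous φ)
    (hfφ : AEStronglyMeasurable (f - φ) (ν.prod μ))
    (hfz : AEStronglyMeasurable (fun x => f (x, z)) ν) :
    ⨍⁻ y in s, ∫⁻ x, ‖f (x, y) - f (x, z)‖ₑ ∂ν ∂μ ≤
      ⨍⁻ y in s, ∫⁻ x, ‖f (x, y) - φ (x, y)‖ₑ ∂ν ∂μ +
        ⨍⁻ y in s, ∫⁻ x, ‖φ (x, y) - φ (x, z)‖ₑ ∂ν ∂μ + ∫⁻ x, ‖f (x, z) - φ (x, z)‖ₑ ∂ν := by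
  have hφz : AEStronglyMeasurable (fun x => φ (x, z)) ν :=
    (hφ.comp (Continuous.prodMk_left z)).aestronglyMeasurable
  have hfiber : ∀ y, ∫⁻ x, ‖f (x, y) - f (x, z)‖ₑ ∂ν ≤
      ∫⁻ x, ‖f (x, y) - φ (x, y)‖ₑ ∂ν + ∫⁻ x, ‖φ (x, y) - φ (x, z)‖ₑ ∂ν +
        ∫⁻ x, ‖f (x, z) - φ (x, z)‖ₑ ∂ν := fun y => calc
    _ ≤ ∫⁻ x, ‖f (x, y) - φ (x, y)‖ₑ + ‖φ (x, y) - φ (x, z)‖ₑ + ‖φ (x, z) - f (x, z)‖ₑ ∂ν :=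
      lintegral_mono fun x => by
        simpa only [edist_eq_enorm_sub] using edist_triangle4 _ (φ (x, y)) (φ (x, z)) _
    _ = _ := by
      have hφy : AEMeasurable (fun x => ‖φ (x, y) - φ (x, z)‖ₑ) ν :=
        ((hφ.comp (Continuous.prodMk_left y)).aestronglyMeasurable.sub hφz).enorm
      have hfz' : AEMeasurable (fun x => ‖φ (x, z) - f (x, z)‖ₑ) ν := (hφz.sub hfz).enorm
      rw [lintegral_add_right' _ hfz', lintegral_add_right' _ hφy]
      simp_rw [enorm_sub_rev (φ (_, z))]
  have hh : AEMeasurable (fun y => ∫⁻ x, ‖f (x, y) - φ (x, y)‖ₑ ∂ν) (μ.restrict s) :=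
    hfφ.enorm.lintegral_prod_left'.restrict
  calc _ ≤ _ := setLAverage_mono_ae s (ae_of_all _ hfiber)
    _ ≤ _ := laverage_add_const_le _ _
    _ = _ := by rw [laverage_add_left' hh]

end Fiber

section FiberDifferentiation

variable {X Y E : Type*} [PseudoMetricSpace X] [SecondCountableTopology X] [LocallyCompactSpace X]
  [MeasurableSpace X] [BorelSpace X] [PseudoMetricSpace Y] [SecondCountableTopology Y]
  [LocallyCompactSpace Y] [MeasurableSpace Y] [BorelSpace Y] [NormedAddCommGroup E]
  [NormedSpace ℝ E] (ν : Measure X) [IsLocallyFiniteMeasure ν] (μ : Measure Y)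
  [IsLocallyFiniteMeasure μ] [IsUnifLocDoublingMeasure μ]

theorem MeasureTheory.Integrable.ae_tendsto_setLAverage_closedBall_lintegral_enorm_sub
    {f : X × Y → E} (hf : Integrable f (ν.prod μ)) :
    ∀ᵐ z ∂μ, Tendsto (fun ε => ⨍⁻ y in closedBall z ε, ∫⁻ x, ‖f (x, y) - f (x, z)‖ₑ ∂ν ∂μ)
      (𝓝[>] 0) (𝓝 0) := by
  have := Measure.Regular.of_sigmaCompactSpace_of_isLocallyFiniteMeasure (ν.prod μ)
  obtain ⟨φ, hφ, hφf⟩ := hf.exists_seq_continuous_hasCompactSupport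
  set h : ℕ → Y → ℝ≥0∞ := fun n y => ∫⁻ x, ‖f (x, y) - φ n (x, y)‖ₑ ∂ν
  have hfφ : ∀ n, Integrable (f - φ n) (ν.prod μ) := fun n => hf.sub (hφ n).2.2
  have hh : ∀ n, AEMeasurable (h n) μ := fun n => (hfφ n).1.enorm.lintegral_prod_left'
  have hh_int : ∀ n, ∫⁻ y, h n y ∂μ = ∫⁻ p, ‖f p - φ n p‖ₑ ∂(ν.prod μ) := fun n =>
    (lintegral_prod_symm _ (hfφ n).1.enorm).symm
  filter_upwards [hf.prod_left_ae,
    ae_iInf_eq_zero_of_iInf_lintegral_eq_zero hh (by simpa only [hh_int] using hφf),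
    ae_all_iff.2 fun n => IsUnifLocDoublingMeasure.ae_tendsto_setLAverage_closedBall μ (hh n)
      ((hh_int n).trans_ne (hfφ n).2.ne)] with z hfz hinf hdiff
  refine ENNReal.tendsto_nhds_zero_of_forall_le (b := fun n => 2 * h n z) (fun n => ?_)
    (fun n ε => setLAverage_lintegral_enorm_sub_le_add _ (hφ n).1 (hfφ n).1 hfz.1)
    (by rw [← ENNReal.mul_iInf_of_ne two_ne_zero ofNat_ne_top, hinf, mul_zero])
  have hcont := tendsto_setLAverage_closedBall_of_tendsto_zero μ
    ((hφ n).1.tendsto_lintegral_enorm_sub_of_hasCompactSupport (ν := ν) (hφ n).2.1 z)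
  simpa [two_mul] using ((hdiff n).add hcont).add_const (h n z)

end FiberDifferentiation

theorem lebesgue_differentiation_fiber_general (n k : ℕ)
    (f : EuclideanSpace ℝ (Fin (2 * (n - k))) × EuclideanSpace ℝ (Fin (2 * k)) → ℂ)
    (hf : Integrable f volume) :
    ∀ᵐ z'' : EuclideanSpace ℝ (Fin (2 * k)) ∂volume,
      Integrable (fun w' => f (w', z'')) volume ∧
      Tendsto (fun ε : ℝ =>
          (volume (ball z'' ε))⁻¹ *
            ∫⁻ w'' in ball z'' ε,
              ∫⁻ w', (‖f (w', w'') - f (w', z'')‖₊ : ℝ≥0∞) ∂volume ∂volume)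
        (nhdsWithin 0 (Set.Ioi 0)) (nhds 0) := by
  filter_upwards [hf.prod_left_ae, hf.ae_tendsto_setLAverage_closedBall_lintegral_enorm_sub]
    with z hfz hlim
  refine ⟨hfz, hlim.congr' ?_⟩
  filter_upwards [self_mem_nhdsWithin] with ε hε
  rw [← setLAverage_congr (Measure.addHaar_ball_ae_eq_closedBall _ z (ne_of_gt hε)),
    setLAverage_eq, ENNReal.div_eq_inv_mul]
  simp only [enorm_eq_nnnorm]

/-- **Lebesgue-type differentiation theorem for fiber integrals.** For `f ∈ L¹(ℂⁿ)`,
`ℂⁿ = ℂ^{n-k} × ℂᵏ` (identifying `ℂᵐ ≅ ℝ^{2m}`), for almost every `z'' ∈ ℂᵏ` the fiber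
`w' ↦ f(w',z'')` is integrable and
`lim_{ε→0} (1/λ_k(B(z'',ε))) ∫_{B(z'',ε)} ∫_{ℂ^{n-k}} |f(w',w'') − f(w',z'')| = 0`. -/
theorem lebesgue_differentiation_fiber (n k : ℕ) (hk : 1 ≤ k) (hkn : k ≤ n)
    (f : EuclideanSpace ℝ (Fin (2 * (n - k))) × EuclideanSpace ℝ (Fin (2 * k)) → ℂ)
    (hf : Integrable f volume) :
    ∀ᵐ z'' : EuclideanSpace ℝ (Fin (2 * k)) ∂volume,
      Integrable (fun w' => f (w', z'')) volume ∧
      Tendsto (fun ε : ℝ =>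
          (volume (ball z'' ε))⁻¹ *
            ∫⁻ w'' in ball z'' ε,
              ∫⁻ w', (‖f (w', w'') - f (w', z'')‖₊ : ℝ≥0∞) ∂volume ∂volume)
        (nhdsWithin 0 (Set.Ioi 0)) (nhds 0) :=
  lebesgue_differentiation_fiber_general n k f hf
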